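/- arXiv:2105.08013 — 4 statements merged into one kernel-verified Lean document; each statement's English description precedes it below -/
import Mathlib

section
/- For every subject t ∈ {1,…,n} and every variable j ∈ {1,…,d}, the uniqueness Shapley value satisfies φ_{t,j} ≥ 0; moreover, φ_{t,j} = 0 if and only if x_{ij} = x_{tj} for all i ∈ {1,…,n}. -/
/-!
Adding variables to `u` can only shrink subject `t`'s cohort, so `val_t` is monotone and every
marginal contribution `val_t (u ∪ {j}) - val_t u` in `φ_{t,j}` is nonnegative, with a positive
weight. So `φ_{t,j} = 0` iff adding `j` never changes the cohort size; at `u = ∅` this reads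
`N_t({j}) = n`, i.e. every subject agrees with `t` on `j`, and conversely then the condition on
`j` is vacuous in every cohort.
-/

open Finset

variable {n d : ℕ} {X : Fin d → Type} [∀ j, Fintype (X j)] [∀ j, DecidableEq (X j)]

/-- Number of subjects matching subject `t` on every variable in `u`. -/
def cohortN (x : Fin n → ∀ j, X j) (t : Fin n) (u : Finset (Fin d)) : ℕ :=
  (Finset.univ.filter fun i => ∀ j ∈ u, x i j = x t j).card

/-- Value function `val_t(u) = -log₂(N_t(u)/n)`. -/
noncomputable def uVal (x : Fin n → ∀ j, X j) (t : Fin n) (u : Finset (Fin d)) : ℝ :=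
  -Real.logb 2 ((cohortN x t u : ℝ) / n)

/-- Uniqueness Shapley value of variable `j` for subject `t`. -/
noncomputable def uShap (x : Fin n → ∀ j, X j) (t : Fin n) (j : Fin d) : ℝ :=
  (d : ℝ)⁻¹ * ∑ u ∈ ((Finset.univ : Finset (Fin d)).erase j).powerset,
    ((d - 1).choose u.card : ℝ)⁻¹ * (uVal x t (insert j u) - uVal x t u)

/-- Global uniqueness Shapley value. -/
noncomputable def uShapGlobal (x : Fin n → ∀ j, X j) (j : Fin d) : ℝ :=
  (n : ℝ)⁻¹ * ∑ t, uShap x t j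

/-- Marginal empirical probability of observing `z` on the variables in `u`. -/
noncomputable def margP (x : Fin n → ∀ j, X j) (u : Finset (Fin d))
    (z : ∀ j : u, X j.1) : ℝ :=
  ((Finset.univ.filter fun i : Fin n => ∀ j : u, x i j.1 = z j).card : ℝ) / n

/-- Empirical entropy of the variables in `u` (convention `0·log₂ 0 = 0` holds automatically). -/
noncomputable def emEnt (x : Fin n → ∀ j, X j) (u : Finset (Fin d)) : ℝ :=
  -∑ z : (∀ j : u, X j.1), margP x u z * Real.logb 2 (margP x u z)

variable {n d : ℕ} {X : Fin d → Type} [∀ j, DecidableEq (X j)]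

section Cohort

variable (x : Fin n → ∀ j, X j) (t : Fin n)

lemma cohortN_pos (u : Finset (Fin d)) : 0 < cohortN x t u :=
  card_pos.2 ⟨t, by simp⟩

lemma cohortN_antitone : Antitone (cohortN x t) := fun _ _ huv =>
  card_le_card fun _ hi => by
    simp only [mem_filter, mem_univ, true_and] at hi ⊢
    exact fun k hk => hi k (huv hk)

lemma cohortN_empty : cohortN x t ∅ = n := by
  simp [cohortN]

lemma cohortN_singleton_eq_iff (j : Fin d) : cohortN x t {j} = n ↔ ∀ i, x i j = x t j := by
  simpa [cohortN] using card_filter_eq_iff (s := univ) (p := fun i => x i j = x t j)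

lemma cohortN_insert_of_forall_eq {j : Fin d} (hj : ∀ i, x i j = x t j) (u : Finset (Fin d)) :
    cohortN x t (insert j u) = cohortN x t u := by
  simp only [cohortN, forall_mem_insert, hj, true_and]

lemma uVal_le_uVal_iff (u v : Finset (Fin d)) :
    uVal x t u ≤ uVal x t v ↔ cohortN x t v ≤ cohortN x t u := by
  have hn : (0 : ℝ) < n := Nat.cast_pos.2 t.pos
  have hpos (w : Finset (Fin d)) : (0 : ℝ) < cohortN x t w / n :=
    div_pos (Nat.cast_pos.2 (cohortN_pos x t w)) hn
  rw [uVal, uVal, neg_le_neg_iff, Real.logb_le_logb one_lt_two (hpos v) (hpos u),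
    div_le_div_iff_of_pos_right hn, Nat.cast_le]

lemma uVal_monotone : Monotone (uVal x t) := fun u v huv =>
  (uVal_le_uVal_iff x t u v).2 (cohortN_antitone x t huv)

lemma uVal_eq_uVal_iff (u v : Finset (Fin d)) :
    uVal x t u = uVal x t v ↔ cohortN x t u = cohortN x t v := by
  rw [le_antisymm_iff, le_antisymm_iff, uVal_le_uVal_iff, uVal_le_uVal_iff, and_comm]

end Cohort

lemma choose_card_pos_of_subset_erase {j : Fin d} {u : Finset (Fin d)}
    (hu : u ⊆ univ.erase j) : 0 < (d - 1).choose u.card := by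
  apply Nat.choose_pos
  simpa using card_le_card hu

section Shapley

variable (x : Fin n → ∀ j, X j) (t : Fin n) (j : Fin d)

lemma uShap_term_nonneg (u : Finset (Fin d)) :
    0 ≤ ((d - 1).choose u.card : ℝ)⁻¹ * (uVal x t (insert j u) - uVal x t u) :=
  mul_nonneg (by positivity) (sub_nonneg.2 (uVal_monotone x t (subset_insert j u)))

lemma uShap_nonneg : 0 ≤ uShap x t j :=
  mul_nonneg (by positivity) (sum_nonneg fun u _ => uShap_term_nonneg x t j u)

lemma uShap_eq_zero_iff :
    uShap x t j = 0 ↔ ∀ u ⊆ univ.erase j, cohortN x t (insert j u) = cohortN x t u := by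
  have hd : (d : ℝ)⁻¹ ≠ 0 := inv_ne_zero (Nat.cast_ne_zero.2 j.pos.ne')
  rw [uShap, mul_eq_zero, or_iff_right hd,
    sum_eq_zero_iff_of_nonneg fun u _ => uShap_term_nonneg x t j u]
  simp only [mem_powerset]
  refine forall₂_congr fun u hu => ?_
  have hchoose : ((d - 1).choose u.card : ℝ)⁻¹ ≠ 0 :=
    inv_ne_zero (Nat.cast_ne_zero.2 (choose_card_pos_of_subset_erase hu).ne')
  rw [mul_eq_zero, or_iff_right hchoose, sub_eq_zero, uVal_eq_uVal_iff]

end Shapley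

theorem uniquenessShapley_nonneg_and_eq_zero_iff_general
    (n d : ℕ)
    (X : Fin d → Type) [∀ j, DecidableEq (X j)]
    (x : Fin n → ∀ j, X j) (t : Fin n) (j : Fin d) :
    0 ≤ uShap x t j ∧ (uShap x t j = 0 ↔ ∀ i, x i j = x t j) := by
  refine ⟨uShap_nonneg x t j, (uShap_eq_zero_iff x t j).trans ⟨fun h => ?_, fun hj u _ =>
    cohortN_insert_of_forall_eq x t hj u⟩⟩
  rw [← cohortN_singleton_eq_iff, ← insert_empty]
  exact (h ∅ (empty_subset _)).trans (cohortN_empty x t)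

/-- the uniqueness Shapley value `φ_{t,j}` is nonnegative, and it is zero
if and only if every subject matches subject `t` on variable `j`. -/
theorem uniquenessShapley_nonneg_and_eq_zero_iff
    (n d : ℕ) (hn : 1 ≤ n) (hd : 1 ≤ d)
    (X : Fin d → Type) [∀ j, Fintype (X j)] [∀ j, DecidableEq (X j)]
    (x : Fin n → ∀ j, X j) (t : Fin n) (j : Fin d) :
    0 ≤ uShap x t j ∧ (uShap x t j = 0 ↔ ∀ i, x i j = x t j) :=
  uniquenessShapley_nonneg_and_eq_zero_iff_general n d X x t j
end

section
/- The global uniqueness Shapley value of variable j is a weighted sum of conditional empirical entropies: φ^{1:n}_j = (1/d) Σ_{u ⊆ {1,…,d}∖{j}} binom(d−1,|u|)⁻¹ 𝓗(j|u). -/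
/-!
Average the per-subject value over subjects by grouping them according to their pattern `z` on
the variables in `u`: every subject in that group has cohort size `n · p_u(z)`, and the group has
exactly that many members, so the average of `-log₂ (N_t(u)/n)` is `-∑_z p_u(z) log₂ p_u(z)`.
Since the Shapley value is linear in the value function, averaging it over subjects replaces
`val_t` by the empirical entropy.
-/

open Finset

variable {n d : ℕ} {X : Fin d → Type} [∀ j, Fintype (X j)] [∀ j, DecidableEq (X j)]

theorem Finset.sum_comp_card_fiber {ι β M : Type*} [Fintype ι] [Fintype β] [DecidableEq β]
    [AddCommMonoid M] (g : ι → β) (f : ℕ → M) :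
    ∑ t, f #{i | g i = g t} = ∑ z, #{i | g i = z} • f #{i | g i = z} := by
  rw [← sum_fiberwise univ g]
  refine sum_congr rfl fun z _ => ?_
  rw [← sum_const]
  refine sum_congr rfl fun t ht => ?_
  rw [(mem_filter.mp ht).2]

theorem cohortN_eq_card_fiber {n d : ℕ} {X : Fin d → Type} [∀ j, DecidableEq (X j)]
    (x : Fin n → ∀ j, X j) (t : Fin n) (u : Finset (Fin d)) :
    cohortN x t u = #{i | (fun j : u => x i j.1) = fun j : u => x t j.1} := by
  simp only [cohortN, funext_iff, Subtype.forall]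

theorem mean_uVal_eq_emEnt (x : Fin n → ∀ j, X j) (u : Finset (Fin d)) :
    (n : ℝ)⁻¹ * ∑ t, uVal x t u = emEnt x u := by
  simp only [uVal, cohortN_eq_card_fiber,
    sum_comp_card_fiber (fun t (j : u) => x t j.1) fun c => -Real.logb 2 ((c : ℝ) / n)]
  simp only [emEnt, margP, funext_iff, mul_sum, ← sum_neg_distrib, nsmul_eq_mul]
  refine sum_congr rfl fun z _ => ?_
  ring

theorem globalUniquenessShapley_eq_weighted_condEntropies_general
    (n d : ℕ)
    (X : Fin d → Type) [∀ j, Fintype (X j)] [∀ j, DecidableEq (X j)]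
    (x : Fin n → ∀ j, X j) (j : Fin d) :
    uShapGlobal x j
      = (d : ℝ)⁻¹ * ∑ u ∈ ((Finset.univ : Finset (Fin d)).erase j).powerset,
          ((d - 1).choose u.card : ℝ)⁻¹ * (emEnt x (insert j u) - emEnt x u) := by
  simp only [uShapGlobal, uShap, ← mean_uVal_eq_emEnt x, mul_sum, mul_sub, sum_sub_distrib]
  rw [sum_comm, sum_comm (s := univ)]
  simp only [mul_left_comm]

/-- the global uniqueness Shapley value of variable `j` is a weighted sum of
conditional empirical entropies `𝓗(j|u) = 𝓗(u∪{j}) - 𝓗(u)`. -/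
theorem globalUniquenessShapley_eq_weighted_condEntropies
    (n d : ℕ) (hn : 1 ≤ n) (hd : 1 ≤ d)
    (X : Fin d → Type) [∀ j, Fintype (X j)] [∀ j, DecidableEq (X j)]
    (x : Fin n → ∀ j, X j) (j : Fin d) :
    uShapGlobal x j
      = (d : ℝ)⁻¹ * ∑ u ∈ ((Finset.univ : Finset (Fin d)).erase j).powerset,
          ((d - 1).choose u.card : ℝ)⁻¹ * (emEnt x (insert j u) - emEnt x u) :=
  globalUniquenessShapley_eq_weighted_condEntropies_general n d X x j
end

section
/- For every variable j ∈ {1,…,d} and every nonempty subset v ⊆ {1,…,n}, the subset-aggregated uniqueness Shapley value can be written in terms of cross entropies: φ^v_j = (1/d) Σ_{u ⊆ {1,…,d}∖{j}} binom(d−1,|u|)⁻¹ (H(p_{u∪{j}}, q_{u∪{j}}) − H(p_u, q_u)). -/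
open Finset

variable {n d : ℕ} {X : Fin d → Type} [∀ j, Fintype (X j)] [∀ j, DecidableEq (X j)]

/-- Empirical distribution `q_w` of the variables in `w` over the subset `v` of subjects. -/
noncomputable def subQ (x : Fin n → ∀ j, X j) (v : Finset (Fin n)) (w : Finset (Fin d))
    (z : ∀ j : w, X j.1) : ℝ :=
  ((v.filter fun t => ∀ j : w, x t j.1 = z j).card : ℝ) / v.card

/-- Cross entropy `H(p_w, q_w) = -Σ_z q_w(z) log₂ p_w(z)`; terms with `q_w(z) = 0` vanish,
so the sum over all `z` agrees with the sum over `z` with `q_w(z) > 0`. -/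
noncomputable def crossEnt (x : Fin n → ∀ j, X j) (v : Finset (Fin n))
    (w : Finset (Fin d)) : ℝ :=
  -∑ z : (∀ j : w, X j.1), subQ x v w z * Real.logb 2 (margP x w z)

/-! Since `N_t(u)/n = p_u(x_t|_u)`, the value `val_t(u)` depends on `t` only through `x_t|_u`;
averaging it over `v` and grouping subjects by that restriction weights `-log₂ p_u(z)` by
`q_u(z)`, which is the cross entropy `H(p_u, q_u)`. The Shapley combination is linear, so it
commutes with averaging over `v`. -/

theorem inv_card_mul_sum_uVal_eq_crossEnt (x : Fin n → ∀ j, X j) (v : Finset (Fin n))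
    (w : Finset (Fin d)) :
    (v.card : ℝ)⁻¹ * ∑ t ∈ v, uVal x t w = crossEnt x v w := by
  set g : Fin n → ∀ j : w, X j.1 := fun t j => x t j.1
  have cohortN_div_eq (t : Fin n) : (cohortN x t w : ℝ) / n = margP x w (g t) := by
    simp only [cohortN, margP, g, Subtype.forall, eq_comm]
  have fiber_eq (z : ∀ j : w, X j.1) :
      {t ∈ v | g t = z} = v.filter fun t => ∀ j : w, x t j.1 = z j := by
    simp only [g, funext_iff]
  calc (v.card : ℝ)⁻¹ * ∑ t ∈ v, uVal x t w
      = (v.card : ℝ)⁻¹ * ∑ t ∈ v, -Real.logb 2 (margP x w (g t)) := by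
        simp only [uVal, cohortN_div_eq]
    _ = (v.card : ℝ)⁻¹ * ∑ z, #{t ∈ v | g t = z} • -Real.logb 2 (margP x w z) := by
        rw [← sum_fiberwise' v g fun z => -Real.logb 2 (margP x w z)]
        simp only [sum_const]
    _ = crossEnt x v w := by
        simp only [crossEnt, subQ, fiber_eq, nsmul_eq_mul, mul_sum, ← sum_neg_distrib]
        refine sum_congr rfl fun z _ => ?_
        ring

theorem subsetUniquenessShapley_eq_crossEntropies_general
    (n d : ℕ)
    (X : Fin d → Type) [∀ j, Fintype (X j)] [∀ j, DecidableEq (X j)]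
    (x : Fin n → ∀ j, X j) (j : Fin d)
    (v : Finset (Fin n)) :
    (v.card : ℝ)⁻¹ * ∑ t ∈ v, uShap x t j
      = (d : ℝ)⁻¹ * ∑ u ∈ ((Finset.univ : Finset (Fin d)).erase j).powerset,
          ((d - 1).choose u.card : ℝ)⁻¹
            * (crossEnt x v (insert j u) - crossEnt x v u) := by
  simp only [← inv_card_mul_sum_uVal_eq_crossEnt, uShap, mul_sum, mul_sub]
  rw [sum_comm]
  refine sum_congr rfl fun u _ => ?_
  rw [← sum_sub_distrib]
  refine sum_congr rfl fun t _ => ?_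
  ring

/-- the subset-aggregated uniqueness Shapley value
`φ^v_j = (1/|v|) Σ_{t∈v} φ_{t,j}` equals the weighted sum of cross-entropy differences. -/
theorem subsetUniquenessShapley_eq_crossEntropies
    (n d : ℕ) (hn : 1 ≤ n) (hd : 1 ≤ d)
    (X : Fin d → Type) [∀ j, Fintype (X j)] [∀ j, DecidableEq (X j)]
    (x : Fin n → ∀ j, X j) (j : Fin d)
    (v : Finset (Fin n)) (hv : v.Nonempty) :
    (v.card : ℝ)⁻¹ * ∑ t ∈ v, uShap x t j
      = (d : ℝ)⁻¹ * ∑ u ∈ ((Finset.univ : Finset (Fin d)).erase j).powerset,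
          ((d - 1).choose u.card : ℝ)⁻¹
            * (crossEnt x v (insert j u) - crossEnt x v u) :=
  subsetUniquenessShapley_eq_crossEntropies_general n d X x j v
end

section
/- Suppose the data set is augmented with an additional variable indexed 0 whose values x_{i0} are pairwise distinct across subjects (a database key). Then for every subject t and every original variable j ∈ {1,…,d}, the uniqueness Shapley value of variable j computed from the d+1 variables {0,1,…,d} equals (1/(d+1)) Σ_{u ⊆ {1,…,d}∖{j}} binom(d,|u|)⁻¹ (val_t(u∪{j}) − val_t(u)), where val_t is the value function computed from the original d variables only. -/
open Finset

variable {n d : ℕ} {X : Fin d → Type} [∀ j, Fintype (X j)] [∀ j, DecidableEq (X j)]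

section Key

variable {n d : ℕ} {X : Fin d → Type} [∀ j, DecidableEq (X j)]
  {x : Fin n → ∀ j, X j} {k : Fin d}

theorem cohortN_eq_one_of_key_mem (hkey : Function.Injective fun i => x i k) (t : Fin n)
    {u : Finset (Fin d)} (hk : k ∈ u) : cohortN x t u = 1 := by
  rw [cohortN, Finset.card_eq_one]
  refine ⟨t, Finset.ext fun i => ?_⟩
  simp only [Finset.mem_filter, Finset.mem_univ, true_and, Finset.mem_singleton]
  exact ⟨fun h => hkey (h k hk), by rintro rfl _ _; rfl⟩

theorem uVal_insert_of_key_mem (hkey : Function.Injective fun i => x i k) (t : Fin n)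
    (j : Fin d) {u : Finset (Fin d)} (hk : k ∈ u) :
    uVal x t (insert j u) = uVal x t u := by
  rw [uVal, uVal, cohortN_eq_one_of_key_mem hkey t hk,
    cohortN_eq_one_of_key_mem hkey t (Finset.mem_insert_of_mem hk)]

/-- A coalition containing the key already singles out every subject, so only the coalitions
avoiding the key contribute to the Shapley sum. -/
theorem uShap_eq_sum_erase_key (hkey : Function.Injective fun i => x i k) (t : Fin n)
    {j : Fin d} (hj : j ≠ k) :
    uShap x t j = (d : ℝ)⁻¹ * ∑ u ∈ ((Finset.univ.erase k).erase j).powerset,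
      ((d - 1).choose u.card : ℝ)⁻¹ * (uVal x t (insert j u) - uVal x t u) := by
  have hsplit : Finset.univ.erase j = insert k ((Finset.univ.erase k).erase j) := by
    rw [Finset.erase_right_comm, Finset.insert_erase (by simpa using hj.symm)]
  rw [uShap, hsplit, Finset.sum_powerset_insert (by simp)]
  congr 1
  refine add_eq_left.mpr (Finset.sum_eq_zero fun u _ => ?_)
  rw [uVal_insert_of_key_mem hkey t j (Finset.mem_insert_self k u), sub_self, mul_zero]

end Key

theorem uniquenessShapley_with_database_key_general
    (n d : ℕ)
    (X : Fin (d + 1) → Type) [∀ j, DecidableEq (X j)]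
    (x : Fin n → ∀ j, X j)
    (hkey : ∀ i i' : Fin n, x i 0 = x i' 0 → i = i') :
    ∀ (t : Fin n) (j : Fin (d + 1)), j ≠ 0 →
      uShap x t j
        = ((d : ℝ) + 1)⁻¹
            * ∑ u ∈ (((Finset.univ : Finset (Fin (d + 1))).erase 0).erase j).powerset,
                (d.choose u.card : ℝ)⁻¹ * (uVal x t (insert j u) - uVal x t u) := by
  intro t j hj
  rw [uShap_eq_sum_erase_key hkey t hj]
  push_cast
  rfl

/-- augment the `d` original variables (indices `1,…,d`, here the nonzero
indices of `Fin (d+1)`) with a database key (index `0`) taking pairwise distinct values.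
Then the uniqueness Shapley value of an original variable `j ≠ 0`, computed from all `d+1`
variables, equals `(1/(d+1)) Σ_{u ⊆ originals∖{j}} binom(d,|u|)⁻¹ (val_t(u∪{j}) − val_t(u))`,
where `val_t` is the value function of the original variables (cohorts on `u ∌ 0` depend
only on the original variables). -/
theorem uniquenessShapley_with_database_key
    (n d : ℕ) (hn : 1 ≤ n) (hd : 1 ≤ d)
    (X : Fin (d + 1) → Type) [∀ j, Fintype (X j)] [∀ j, DecidableEq (X j)]
    (x : Fin n → ∀ j, X j)
    (hkey : ∀ i i' : Fin n, x i 0 = x i' 0 → i = i') :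
    ∀ (t : Fin n) (j : Fin (d + 1)), j ≠ 0 →
      uShap x t j
        = ((d : ℝ) + 1)⁻¹
            * ∑ u ∈ (((Finset.univ : Finset (Fin (d + 1))).erase 0).erase j).powerset,
                (d.choose u.card : ℝ)⁻¹ * (uVal x t (insert j u) - uVal x t u) :=
  uniquenessShapley_with_database_key_general n d X x hkey
end
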